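/- Fix integers r ≥ 0, i with 1 ≤ i ≤ r+1, and j ≥ 1. The functions x, g_{i,j}^{(0)}, g_{i,j}^{(1)}, …, g_{i,j}^{(i)} on ℝ^{r+3} are algebraically independent over ℝ: if P is a real polynomial in i+2 variables such that P(x, g_{i,j}^{(0)}(x,z), …, g_{i,j}^{(i)}(x,z)) = 0 for all (x,z) ∈ ℝ^{r+3}, then P = 0. -/

import Mathlib

open scoped BigOperators

/-- Partial derivative of a function on `ℝⁿ = (Fin n → ℝ)` with respect to the `m`-th
coordinate (and `0` if `m` is out of range). -/
noncomputable def pderiv' (n m : ℕ) (f : (Fin n → ℝ) → ℝ) : (Fin n → ℝ) → ℝ :=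
  fun p => if h : m < n then fderiv ℝ f p (Pi.single (⟨m, h⟩ : Fin n) 1) else 0

/-- The total derivative operator `D f = ∂f/∂x + ∑_{m=0}^{r} z_{m+1} ∂f/∂z_m` on functions of
the variables `(x, z_0, …, z_{r+1})`, where `x` is coordinate `0` and `z_m` is coordinate
`m+1`. -/
noncomputable def Dop (r : ℕ) (f : (Fin (r+3) → ℝ) → ℝ) : (Fin (r+3) → ℝ) → ℝ :=
  fun p => pderiv' (r+3) 0 f p +
    ∑ m : Fin (r+1), p ⟨m.val + 2, by have := m.isLt; omega⟩ * pderiv' (r+3) (m.val + 1) f p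

/-- The polynomial function
`g_{i,j}(x,z) = ∑_{m=0}^{i} (−1)^{i−m} C(i,m) ((i+j−m−1)!/((j−1)!(i+j)!)) x^m z_m`. -/
noncomputable def gfun (r i j : ℕ) : (Fin (r+3) → ℝ) → ℝ :=
  fun p => ∑ m : Fin (i+1),
    (-1 : ℝ) ^ (i - m.val) * (i.choose m.val : ℝ) *
      ((Nat.factorial (i + j - m.val - 1) : ℝ) /
        ((Nat.factorial (j - 1) : ℝ) * (Nat.factorial (i + j) : ℝ))) *
      (p 0) ^ (m.val) * (if h : m.val + 1 < r + 3 then p ⟨m.val + 1, h⟩ else 0)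

/-- `g_{i,j}^{(s)} = ∂^s g_{i,j} / ∂x^s`. -/
noncomputable def gs (r i j s : ℕ) : (Fin (r+3) → ℝ) → ℝ :=
  (pderiv' (r+3) 0)^[s] (gfun r i j)

/-!
For fixed `x`, the jet `(g_{i,j}^{(0)}, …, g_{i,j}^{(i)})` is a linear function of
`(z_0, …, z_i)` whose matrix `(c_m · m(m-1)⋯(m-s+1) · x^{m-s})_{s,m}` is upper triangular with
the nonzero coefficients `c_m` of `g_{i,j}` times `m!` on its diagonal. Hence
`(x, z) ↦ (x, g_{i,j}^{(0)}, …, g_{i,j}^{(i)})` is onto `ℝ^{i+2}`, so `P` vanishes on all of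
`ℝ^{i+2}` and is the zero polynomial.
-/

open Matrix

theorem MvPolynomial.eq_zero_of_eval_surjective {R σ α : Type*} [CommRing R] [IsDomain R]
    [Infinite R] {F : α → σ → R} (hF : Function.Surjective F) {P : MvPolynomial σ R}
    (hP : ∀ a, MvPolynomial.eval (F a) P = 0) : P = 0 :=
  MvPolynomial.funext fun x => by
    obtain ⟨a, rfl⟩ := hF x
    rw [hP, map_zero]

theorem pderiv'_zero_sum_mul_pow_mul {n : ℕ} {ι : Type*} [Fintype ι] (c : ι → ℝ) (e : ι → ℕ)
    (k : ι → Fin (n + 1)) (hk : ∀ m, k m ≠ 0) (p : Fin (n + 1) → ℝ) :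
    pderiv' (n + 1) 0 (fun q => ∑ m, c m * q 0 ^ e m * q (k m)) p
      = ∑ m, c m * ((e m : ℝ) * p 0 ^ (e m - 1)) * p (k m) := by
  let proj : Fin (n + 1) → (Fin (n + 1) → ℝ) →L[ℝ] ℝ := ContinuousLinearMap.proj
  have hF : HasFDerivAt (fun q : Fin (n + 1) → ℝ => ∑ m, c m * q 0 ^ e m * q (k m))
      (∑ m, c m • (p 0 ^ e m • proj (k m) + p (k m) • ((e m * p 0 ^ (e m - 1) : ℝ) • proj 0)))
      p := by
    refine HasFDerivAt.fun_sum fun m _ => ?_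
    have h0 : HasFDerivAt (fun q : Fin (n + 1) → ℝ => q 0) (proj 0) p := hasFDerivAt_apply 0 p
    have hpow := (hasDerivAt_pow (e m) (p 0)).comp_hasFDerivAt p h0
    simpa [mul_assoc] using (hpow.mul (hasFDerivAt_apply (k m) p)).const_mul (c m)
  rw [pderiv', dif_pos n.succ_pos, hF.fderiv]
  simp only [FunLike.coe_sum, Finset.sum_apply, FunLike.coe_smul, FunLike.coe_add,
    Pi.smul_apply, Pi.add_apply, proj, ContinuousLinearMap.proj_apply, Pi.single_apply,
    Fin.zero_eta, if_true, if_neg (hk _), smul_eq_mul, mul_zero, zero_add, mul_one]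
  refine Finset.sum_congr rfl fun m _ => ?_
  ring

noncomputable def gCoeff (i j m : ℕ) : ℝ :=
  (-1 : ℝ) ^ (i - m) * (i.choose m : ℝ) *
    ((Nat.factorial (i + j - m - 1) : ℝ) /
      ((Nat.factorial (j - 1) : ℝ) * (Nat.factorial (i + j) : ℝ)))

theorem gCoeff_ne_zero {i m : ℕ} (j : ℕ) (hm : m ≤ i) : gCoeff i j m ≠ 0 := by
  unfold gCoeff
  have := Nat.choose_pos hm
  positivity

def zCoord {r i : ℕ} (hir : i ≤ r + 1) (m : Fin (i + 1)) : Fin (r + 3) :=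
  (Fin.castLE (by omega) m).succ

theorem gs_eq {r i : ℕ} (j : ℕ) (hir : i ≤ r + 1) (s : ℕ) :
    gs r i j s = fun p => ∑ m : Fin (i + 1),
      gCoeff i j m * (m.val.descFactorial s : ℝ) * p 0 ^ (m.val - s) * p (zCoord hir m) := by
  induction s with
  | zero =>
    funext p
    show gfun r i j p = _
    refine Finset.sum_congr rfl fun m _ => ?_
    rw [dif_pos (by omega), Nat.descFactorial_zero, Nat.cast_one, mul_one, Nat.sub_zero]
    rfl
  | succ s ih =>
    rw [gs, Function.iterate_succ_apply', ← gs, ih]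
    funext p
    refine (pderiv'_zero_sum_mul_pow_mul _ _ (zCoord hir) (fun _ => Fin.succ_ne_zero _) p).trans ?_
    refine Finset.sum_congr rfl fun m _ => ?_
    rw [Nat.descFactorial_succ, Nat.sub_sub]
    push_cast
    ring

noncomputable def gJetMatrix (i j : ℕ) (a : ℝ) : Matrix (Fin (i + 1)) (Fin (i + 1)) ℝ :=
  Matrix.of fun s m => gCoeff i j m * (m.val.descFactorial s : ℝ) * a ^ (m.val - s)

theorem gs_apply_eq_mulVec {r i : ℕ} (j : ℕ) (hir : i ≤ r + 1) (s : Fin (i + 1))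
    (p : Fin (r + 3) → ℝ) :
    gs r i j s p = (gJetMatrix i j (p 0) *ᵥ fun m => p (zCoord hir m)) s := by
  rw [gs_eq j hir]
  rfl

theorem gJetMatrix_blockTriangular (i j : ℕ) (a : ℝ) : (gJetMatrix i j a).BlockTriangular id :=
  fun s m hms => by
    have : m.val.descFactorial s = 0 := Nat.descFactorial_eq_zero_iff_lt.mpr hms
    simp [gJetMatrix, this]

theorem isUnit_gJetMatrix (i j : ℕ) (a : ℝ) : IsUnit (gJetMatrix i j a) := by
  rw [isUnit_iff_isUnit_det, isUnit_iff_ne_zero,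
    det_of_isUpperTriangular (gJetMatrix_blockTriangular i j a), Finset.prod_ne_zero_iff]
  intro s _
  have := gCoeff_ne_zero j (Nat.lt_succ_iff.mp s.isLt)
  simp only [gJetMatrix, of_apply, Nat.descFactorial_self, Nat.sub_self, pow_zero, mul_one]
  positivity

noncomputable def gJet (r i j : ℕ) (p : Fin (r + 3) → ℝ) : Fin (i + 2) → ℝ :=
  fun t => if t.val = 0 then p 0 else gs r i j (t.val - 1) p

theorem gJet_surjective {r i : ℕ} (j : ℕ) (hir : i ≤ r + 1) :
    Function.Surjective (gJet r i j) := by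
  intro v
  obtain ⟨z, hz⟩ := mulVec_surjective_iff_isUnit.mpr (isUnit_gJetMatrix i j (v 0)) (Fin.tail v)
  let p : Fin (r + 3) → ℝ :=
    Fin.cons (v 0) fun k : Fin (r + 2) => if h : k.val < i + 1 then z ⟨k, h⟩ else 0
  have hpz : (fun m => p (zCoord hir m)) = z := by
    funext m
    simp [p, zCoord, Fin.is_le m]
  refine ⟨p, funext fun t => ?_⟩
  induction t using Fin.cases with
  | zero => rfl
  | succ s =>
    simp only [gJet, Fin.val_succ, Nat.add_sub_cancel, Nat.succ_ne_zero, if_false]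
    rw [gs_apply_eq_mulVec j hir s, hpz]
    exact congrFun hz s

theorem stmt_9_general (r i j : ℕ) (hir : i ≤ r + 1)
    (P : MvPolynomial (Fin (i+2)) ℝ)
    (hP : ∀ p : Fin (r+3) → ℝ,
      MvPolynomial.eval
        (fun t : Fin (i+2) => if t.val = 0 then p 0 else gs r i j (t.val - 1) p) P = 0) :
    P = 0 :=
  MvPolynomial.eq_zero_of_eval_surjective (gJet_surjective j hir) hP

/-- the functions `x, g_{i,j}^{(0)}, …, g_{i,j}^{(i)}` on `ℝ^{r+3}` are
algebraically independent over `ℝ`: any real polynomial in `i+2` variables vanishing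
identically on them is zero. -/
theorem stmt_9 (r i j : ℕ) (hi : 1 ≤ i) (hir : i ≤ r + 1) (hj : 1 ≤ j)
    (P : MvPolynomial (Fin (i+2)) ℝ)
    (hP : ∀ p : Fin (r+3) → ℝ,
      MvPolynomial.eval
        (fun t : Fin (i+2) => if t.val = 0 then p 0 else gs r i j (t.val - 1) p) P = 0) :
    P = 0 :=
  stmt_9_general r i j hir P hP
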